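/- Let β, γ, δ, μ > 0, set H := (γ+μ)/β, and let B ≥ 0 be a constant with B < μH. Let M, S, I, R : [0,∞) → [0,∞) be differentiable nonnegative functions satisfying the MSIR model M' = B − δM − μM, S' = δM − μS − βIS, I' = βIS − γI − μI, R' = γI − μR for all t ≥ 0. Then lim_{t→∞} I(t) = 0, lim_{t→∞} R(t) = 0, lim_{t→∞} M(t) = B/(δ+μ), and lim_{t→∞} S(t) = δB/(μ(δ+μ)); in particular lim_{t→∞} (M(t)+S(t)+I(t)+R(t)) = B/μ. -/

import Mathlib

/-! Each compartment obeys `f' = g - k f` with `k > 0`; its solutions forget their initial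
value exponentially fast and converge to `L / k` whenever `g → L` (a Grönwall bound with
negative rate). This gives `M → B/(δ+μ)` and, for the total population, `M + S + I + R → B/μ`.
Since `B/μ < H`, eventually `S ≤ M + S + I + R < b` for some `b < H`, so
`I' ≤ -(γ + μ - β b) I` and `I` decays to `0`; then `R' = γI - μR` gives `R → 0`, and `S` is
the remainder of the total. -/

open Filter Topology

lemma tendsto_gronwallBound_atTop {δ K ε : ℝ} (hK : K < 0) :
    Tendsto (gronwallBound δ K ε) atTop (𝓝 (-(ε / K))) := by
  rw [gronwallBound_of_K_ne_0 hK.ne]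
  have hexp : Tendsto (fun x => Real.exp (K * x)) atTop (𝓝 0) :=
    Real.tendsto_exp_atBot.comp (tendsto_id.const_mul_atTop_of_neg hK)
  simpa using (hexp.const_mul δ).add ((hexp.sub_const 1).const_mul (ε / K))

section LinearComparison

variable {f f' : ℝ → ℝ} {a k : ℝ}

lemma le_gronwallBound_of_hasDerivAt_le_sub_mul {T : ℝ} (hf : ∀ t ≥ T, HasDerivAt f (f' t) t)
    (hle : ∀ t ≥ T, f' t ≤ a - k * f t) {t : ℝ} (ht : T ≤ t) :
    f t ≤ gronwallBound (f T) (-k) a (t - T) :=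
  le_gronwallBound_of_liminf_deriv_right_le
    (fun x hx => (hf x hx.1).continuousAt.continuousWithinAt)
    (fun x hx _ hr => (hf x hx.1).hasDerivWithinAt.liminf_right_slope_le hr) le_rfl
    (fun x hx => by linarith [hle x hx.1]) t ⟨ht, le_rfl⟩

lemma eventually_lt_of_hasDerivAt_le_sub_mul (hk : 0 < k)
    (hf : ∀ᶠ t in atTop, HasDerivAt f (f' t) t) (hle : ∀ᶠ t in atTop, f' t ≤ a - k * f t)
    {b : ℝ} (hb : a / k < b) : ∀ᶠ t in atTop, f t < b := by
  obtain ⟨T, hT⟩ := eventually_atTop.1 (hf.and hle)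
  have hlim : Tendsto (fun t => gronwallBound (f T) (-k) a (t - T)) atTop (𝓝 (a / k)) := by
    have := (tendsto_gronwallBound_atTop (δ := f T) (ε := a) (neg_lt_zero.2 hk)).comp
      (tendsto_atTop_add_const_right atTop (-T) tendsto_id)
    simpa [div_neg, sub_eq_add_neg, Function.comp_def] using this
  filter_upwards [hlim.eventually (gt_mem_nhds hb), eventually_ge_atTop T] with t hbound ht
  exact (le_gronwallBound_of_hasDerivAt_le_sub_mul (fun s hs => (hT s hs).1)
    (fun s hs => (hT s hs).2) ht).trans_lt hbound

lemma eventually_gt_of_hasDerivAt_sub_mul_le (hk : 0 < k)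
    (hf : ∀ᶠ t in atTop, HasDerivAt f (f' t) t) (hle : ∀ᶠ t in atTop, a - k * f t ≤ f' t)
    {b : ℝ} (hb : b < a / k) : ∀ᶠ t in atTop, b < f t := by
  have := eventually_lt_of_hasDerivAt_le_sub_mul (f := -f) (f' := -f') (a := -a) hk
    (hf.mono fun t ht => ht.neg) (hle.mono fun t ht => by simp only [Pi.neg_apply]; linarith)
    (b := -b) (by rw [neg_div]; linarith)
  exact this.mono fun t ht => by simp only [Pi.neg_apply] at ht; linarith

lemma tendsto_of_hasDerivAt_sub_mul {g : ℝ → ℝ} {L : ℝ} (hk : 0 < k)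
    (hf : ∀ᶠ t in atTop, HasDerivAt f (g t - k * f t) t) (hg : Tendsto g atTop (𝓝 L)) :
    Tendsto f atTop (𝓝 (L / k)) := by
  refine tendsto_order.2 ⟨fun b hb => ?_, fun b hb => ?_⟩
  · obtain ⟨c, hbc, hcL⟩ := exists_between ((lt_div_iff₀ hk).1 hb)
    refine eventually_gt_of_hasDerivAt_sub_mul_le hk hf ?_ ((lt_div_iff₀ hk).2 hbc)
    filter_upwards [hg.eventually (lt_mem_nhds hcL)] with t ht
    linarith
  · obtain ⟨c, hLc, hcb⟩ := exists_between ((div_lt_iff₀ hk).1 hb)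
    refine eventually_lt_of_hasDerivAt_le_sub_mul hk hf ?_ ((div_lt_iff₀ hk).2 hcb)
    filter_upwards [hg.eventually (gt_mem_nhds hLc)] with t ht
    linarith

lemma tendsto_zero_of_hasDerivAt_le_neg_mul (hk : 0 < k) (hf_nonneg : ∀ᶠ t in atTop, 0 ≤ f t)
    (hf : ∀ᶠ t in atTop, HasDerivAt f (f' t) t) (hle : ∀ᶠ t in atTop, f' t ≤ -k * f t) :
    Tendsto f atTop (𝓝 0) :=
  tendsto_order.2 ⟨fun _ hc => hf_nonneg.mono fun _ ht => hc.trans_le ht,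
    fun _ hc => eventually_lt_of_hasDerivAt_le_sub_mul (a := 0) hk hf
      (hle.mono fun t ht => by linarith) (by rwa [zero_div])⟩

end LinearComparison

theorem msir_disease_free_convergence_general
    (β γ δ μ B : ℝ) (hβ : 0 < β) (hδ : 0 < δ) (hμ : 0 < μ)
    (hB_small : B < μ * ((γ + μ) / β))
    (M S I R : ℝ → ℝ)
    (hM_nonneg : ∀ t ≥ (0:ℝ), 0 ≤ M t)
    (hI_nonneg : ∀ t ≥ (0:ℝ), 0 ≤ I t)
    (hR_nonneg : ∀ t ≥ (0:ℝ), 0 ≤ R t)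
    (hM : ∀ t ≥ (0:ℝ), HasDerivAt M (B - δ * M t - μ * M t) t)
    (hS : ∀ t ≥ (0:ℝ), HasDerivAt S (δ * M t - μ * S t - β * I t * S t) t)
    (hI : ∀ t ≥ (0:ℝ), HasDerivAt I (β * I t * S t - γ * I t - μ * I t) t)
    (hR : ∀ t ≥ (0:ℝ), HasDerivAt R (γ * I t - μ * R t) t) :
    Filter.Tendsto I Filter.atTop (nhds 0) ∧
    Filter.Tendsto R Filter.atTop (nhds 0) ∧
    Filter.Tendsto M Filter.atTop (nhds (B / (δ + μ))) ∧
    Filter.Tendsto S Filter.atTop (nhds (δ * B / (μ * (δ + μ)))) ∧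
    Filter.Tendsto (fun t => M t + S t + I t + R t) Filter.atTop
      (nhds (B / μ)) := by
  have hev {P : ℝ → Prop} (h : ∀ t ≥ (0:ℝ), P t) : ∀ᶠ t in atTop, P t :=
    eventually_atTop.2 ⟨0, h⟩
  have hM_lim : Tendsto M atTop (𝓝 (B / (δ + μ))) :=
    tendsto_of_hasDerivAt_sub_mul (g := fun _ => B) (add_pos hδ hμ)
      (hev fun t ht => (hM t ht).congr_deriv (by ring)) tendsto_const_nhds
  have hN_lim : Tendsto (fun t => M t + S t + I t + R t) atTop (𝓝 (B / μ)) :=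
    tendsto_of_hasDerivAt_sub_mul (g := fun _ => B) hμ (hev fun t ht =>
      ((((hM t ht).add (hS t ht)).add (hI t ht)).add (hR t ht)).congr_deriv (by ring))
      tendsto_const_nhds
  obtain ⟨b, hBb, hbH⟩ := exists_between ((div_lt_iff₀' hμ).2 hB_small)
  have hβb : β * b < γ + μ := (lt_div_iff₀' hβ).1 hbH
  have hS_lt : ∀ᶠ t in atTop, S t < b := by
    filter_upwards [hN_lim.eventually (gt_mem_nhds hBb), eventually_ge_atTop 0] with t hN ht
    linarith [hM_nonneg t ht, hI_nonneg t ht, hR_nonneg t ht]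
  have hI_lim : Tendsto I atTop (𝓝 0) := by
    refine tendsto_zero_of_hasDerivAt_le_neg_mul (sub_pos.2 hβb) (hev hI_nonneg) (hev hI) ?_
    filter_upwards [hS_lt, eventually_ge_atTop 0] with t hSt ht
    have : β * I t * S t ≤ β * I t * b :=
      mul_le_mul_of_nonneg_left hSt.le (mul_nonneg hβ.le (hI_nonneg t ht))
    linarith
  have hR_lim : Tendsto R atTop (𝓝 0) := by
    simpa using tendsto_of_hasDerivAt_sub_mul hμ (hev hR) (hI_lim.const_mul γ)
  have hS_lim : Tendsto S atTop (𝓝 (δ * B / (μ * (δ + μ)))) := by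
    convert ((hN_lim.sub hM_lim).sub hI_lim).sub hR_lim using 2
    · ring
    · field_simp; ring
  exact ⟨hI_lim, hR_lim, hM_lim, hS_lim, hN_lim⟩

/-- In the MSIR model with constant newborn/immigration rate B < μH,
H = (γ+μ)/β, the infected and recovered populations converge to zero and M, S converge
to their disease-free steady-state values; the total population converges to B/μ. -/
theorem msir_disease_free_convergence
    (β γ δ μ B : ℝ) (hβ : 0 < β) (hγ : 0 < γ) (hδ : 0 < δ) (hμ : 0 < μ)
    (hB : 0 ≤ B) (hB_small : B < μ * ((γ + μ) / β))
    (M S I R : ℝ → ℝ)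
    (hM_nonneg : ∀ t ≥ (0:ℝ), 0 ≤ M t)
    (hS_nonneg : ∀ t ≥ (0:ℝ), 0 ≤ S t)
    (hI_nonneg : ∀ t ≥ (0:ℝ), 0 ≤ I t)
    (hR_nonneg : ∀ t ≥ (0:ℝ), 0 ≤ R t)
    (hM : ∀ t ≥ (0:ℝ), HasDerivAt M (B - δ * M t - μ * M t) t)
    (hS : ∀ t ≥ (0:ℝ), HasDerivAt S (δ * M t - μ * S t - β * I t * S t) t)
    (hI : ∀ t ≥ (0:ℝ), HasDerivAt I (β * I t * S t - γ * I t - μ * I t) t)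
    (hR : ∀ t ≥ (0:ℝ), HasDerivAt R (γ * I t - μ * R t) t) :
    Filter.Tendsto I Filter.atTop (nhds 0) ∧
    Filter.Tendsto R Filter.atTop (nhds 0) ∧
    Filter.Tendsto M Filter.atTop (nhds (B / (δ + μ))) ∧
    Filter.Tendsto S Filter.atTop (nhds (δ * B / (μ * (δ + μ)))) ∧
    Filter.Tendsto (fun t => M t + S t + I t + R t) Filter.atTop
      (nhds (B / μ)) :=
  msir_disease_free_convergence_general β γ δ μ B hβ hδ hμ hB_small M S I R hM_nonneg hI_nonneg
    hR_nonneg hM hS hI hR
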